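/- arXiv:0902.3169 — 2 statements merged into one kernel-verified Lean document; each statement's English description precedes it below -/
import Mathlib

section
/- For a finite group H and primes p, q: the subgroup O^q(H) is p-hypoelementary if and only if the quotient H/O_p(H) is q-hyperelementary. -/
/-- `N` is `O^q(H)`: the smallest normal subgroup of `H` whose quotient is a `q`-group. -/
def IsOUpper (q : ℕ) {H : Type*} [Group H] (N : Subgroup H) : Prop :=
  ∃ hN : N.Normal,
    (letI := hN; IsPGroup q (H ⧸ N)) ∧
      ∀ M : Subgroup H, ∀ hM : M.Normal, (letI := hM; IsPGroup q (H ⧸ M)) → N ≤ M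

/-- `H` is `q`-hyperelementary: `O^q(H)` is cyclic. -/
def IsQHyperelementary (q : ℕ) (H : Type*) [Group H] : Prop :=
  ∃ N : Subgroup H, IsOUpper q N ∧ IsCyclic N

/-- `N` is `O_r(H)`: the largest normal `r`-subgroup of `H`. -/
def IsOLower (r : ℕ) {H : Type*} [Group H] (N : Subgroup H) : Prop :=
  N.Normal ∧ IsPGroup r N ∧ ∀ M : Subgroup H, M.Normal → IsPGroup r M → M ≤ N

/-- `H` is `r`-hypoelementary: `H / O_r(H)` is cyclic. -/
def IsRHypoelementary (r : ℕ) (H : Type*) [Group H] : Prop :=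
  ∃ N : Subgroup H, ∃ hN : IsOLower r N, (letI := hN.1; IsCyclic (H ⧸ N))

/-! Both sides are the cyclicity of one group. The `p`-core of the normal subgroup `O^q(H)` is
characteristic in it, hence normal in `H`, so `O_p(O^q(H)) = O_p(H) ∩ O^q(H)`. Pulling back along
`H → H/O_p(H)` preserves `q`-quotients, so `O^q(H/O_p(H))` is the image of `O^q(H)`, which is
`O^q(H)/(O_p(H) ∩ O^q(H))` by the isomorphism theorem. -/

section

variable {G G' : Type*} [Group G] [Group G']

theorem IsOLower.unique {r : ℕ} {C D : Subgroup G} (hC : IsOLower r C) (hD : IsOLower r D) :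
    C = D :=
  le_antisymm (hD.2.2 C hC.1 hC.2.1) (hC.2.2 D hD.1 hD.2.1)

theorem IsOUpper.unique {q : ℕ} {C D : Subgroup G} (hC : IsOUpper q C) (hD : IsOUpper q D) :
    C = D :=
  le_antisymm (hC.2.2 D hD.1 hD.2.1) (hD.2.2 C hC.1 hC.2.1)

/-- Normal `r`-subgroups all lie in a common Sylow `r`-subgroup (which exists by Zorn's lemma),
so their join is again an `r`-group. -/
theorem exists_isOLower (r : ℕ) (G : Type*) [Group G] : ∃ C : Subgroup G, IsOLower r C := by
  let S := {M : Subgroup G | M.Normal ∧ IsPGroup r M}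
  exact ⟨sSup S, Subgroup.sSup_normal S fun M hM => hM.1,
    Sylow.sSup_of_normal S (fun M hM => hM.2) (fun M hM => hM.1),
    fun M hM hMr => le_sSup ⟨hM, hMr⟩⟩

theorem IsOLower.map_mulEquiv {r : ℕ} {C : Subgroup G} (hC : IsOLower r C) (φ : G ≃* G') :
    IsOLower r (C.map φ.toMonoidHom) := by
  refine ⟨hC.1.map _ φ.surjective, hC.2.1.map _, fun M hM hMr => ?_⟩
  have : M.comap φ.toMonoidHom ≤ C :=
    hC.2.2 _ (hM.comap _) (hMr.comap_of_injective _ φ.injective)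
  calc M = (M.comap φ.toMonoidHom).map φ.toMonoidHom :=
        (Subgroup.map_comap_eq_self_of_surjective φ.surjective M).symm
    _ ≤ C.map φ.toMonoidHom := Subgroup.map_mono this

theorem IsOLower.characteristic {r : ℕ} {C : Subgroup G} (hC : IsOLower r C) :
    C.Characteristic :=
  Subgroup.characteristic_iff_map_eq.mpr fun φ => (hC.map_mulEquiv φ).unique hC

/-- The `r`-core of `N` is characteristic in `N`, hence normal in `G`. -/
theorem IsOLower.subgroupOf {r : ℕ} {P N : Subgroup G} [N.Normal] (hP : IsOLower r P) :
    IsOLower r (P.subgroupOf N) := by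
  refine ⟨hP.1.subgroupOf N, hP.2.1.comap_of_injective N.subtype Subtype.coe_injective,
    fun K hK hKr => ?_⟩
  obtain ⟨C, hC⟩ := exists_isOLower r N
  have := hC.characteristic
  have hCP : C.map N.subtype ≤ P := hP.2.2 _ inferInstance (hC.2.1.map _)
  exact (hC.2.2 K hK hKr).trans (Subgroup.map_le_iff_le_comap.mp hCP)

theorem IsPGroup.quotient_comap {q : ℕ} (f : G →* G') {M : Subgroup G'} [M.Normal]
    (hM : IsPGroup q (G' ⧸ M)) : IsPGroup q (G ⧸ M.comap f) := by
  intro x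
  induction x using QuotientGroup.induction_on with | H g => ?_
  obtain ⟨k, hk⟩ := hM (f g)
  refine ⟨k, ?_⟩
  rw [← QuotientGroup.mk_pow, QuotientGroup.eq_one_iff] at hk ⊢
  rwa [Subgroup.mem_comap, map_pow]

theorem IsOUpper.map_of_surjective {q : ℕ} {f : G →* G'} (hf : Function.Surjective f)
    {N : Subgroup G} (hN : IsOUpper q N) : IsOUpper q (N.map f) := by
  obtain ⟨hNn, hNq, hNmin⟩ := hN
  have hNf : (N.map f).Normal := hNn.map f hf
  refine ⟨hNf, hNq.of_surjective _ (QuotientGroup.map_surjective_of_surjective _ _ f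
    (QuotientGroup.mk_surjective.comp hf) (Subgroup.le_comap_map f N)), fun M hM hMq => ?_⟩
  exact Subgroup.map_le_iff_le_comap.mpr (hNmin _ (hM.comap f) (hMq.quotient_comap f))

theorem isRHypoelementary_iff_isCyclic {r : ℕ} {C : Subgroup G} (hC : IsOLower r C) :
    IsRHypoelementary r G ↔ (letI := hC.1; IsCyclic (G ⧸ C)) := by
  constructor
  · rintro ⟨D, hD, hcyc⟩
    obtain rfl := hD.unique hC
    exact hcyc
  · exact fun h => ⟨C, hC, h⟩

theorem isQHyperelementary_iff_isCyclic {q : ℕ} {M : Subgroup G} (hM : IsOUpper q M) :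
    IsQHyperelementary q G ↔ IsCyclic M := by
  constructor
  · rintro ⟨D, hD, hcyc⟩
    obtain rfl := hD.unique hM
    exact hcyc
  · exact fun h => ⟨M, hM, h⟩

noncomputable def QuotientGroup.subgroupOfEquivMapMk' (P N : Subgroup G) [P.Normal] :
    N ⧸ P.subgroupOf N ≃* N.map (QuotientGroup.mk' P) :=
  (QuotientGroup.quotientMulEquivOfEq
      (by rw [Subgroup.ker_subgroupMap, QuotientGroup.ker_mk'])).trans
    (QuotientGroup.quotientKerEquivOfSurjective _ ((QuotientGroup.mk' P).subgroupMap_surjective N))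

end

theorem oUpper_rHypoelementary_iff_quotient_qHyperelementary_general
    (p q : ℕ)
    (H : Type*) [Group H]
    (N : Subgroup H) (hN : IsOUpper q N)
    (P : Subgroup H) (hP : IsOLower p P) :
    IsRHypoelementary p N ↔
      (letI := hP.1; IsQHyperelementary q (H ⧸ P)) := by
  have := hP.1
  have := hN.1
  rw [isRHypoelementary_iff_isCyclic hP.subgroupOf,
    isQHyperelementary_iff_isCyclic (hN.map_of_surjective (QuotientGroup.mk'_surjective P))]
  exact (QuotientGroup.subgroupOfEquivMapMk' P N).isCyclic

/-- For a finite group `H` and primes `p`, `q`: the subgroup `O^q(H)` is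
`p`-hypoelementary iff the quotient `H / O_p(H)` is `q`-hyperelementary. -/
theorem oUpper_rHypoelementary_iff_quotient_qHyperelementary
    (p q : ℕ) (hp : p.Prime) (hq : q.Prime)
    (H : Type*) [Group H] [Finite H]
    (N : Subgroup H) (hN : IsOUpper q N)
    (P : Subgroup H) (hP : IsOLower p P) :
    IsRHypoelementary p N ↔
      (letI := hP.1; IsQHyperelementary q (H ⧸ P)) :=
  oUpper_rHypoelementary_iff_quotient_qHyperelementary_general p q H N hN P hP
end

section
/- Let k be a field of characteristic p, G a finite group, and H ≤ G. If a kH-module B is a direct summand of a permutation kH-module, then the tensor induced kG-module B↑_H^G ⊗ (tensor induction) is a direct summand of a permutation kG-module. -/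
/-!
Write `B` as a direct summand of a permutation module `k[X]`. Tensor induction is functorial in
`H`-equivariant maps, so `B↑⊗` is a direct summand of `k[X]↑⊗ = ⨂_{G/H} k[X] ≅ k[X^{G/H}]`, and
under this isomorphism the tensor induced action becomes the permutation action of `G` on
`X^{G/H}` twisted by the cocycle of the transversal:
`(g · x) c = ((s c)⁻¹ g s (g⁻¹ c)) · x (g⁻¹ c)`.
-/

open LinearMap

section RepPrelude

variable (k : Type*) [Field k]

/-- `f : V →ₗ[k] W` is equivariant for representations `ρ`, `τ` of `G`. -/
def IsEquivariant {G V W : Type*} [Group G] [AddCommGroup V] [Module k V]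
    [AddCommGroup W] [Module k W]
    (ρ : Representation k G V) (τ : Representation k G W) (f : V →ₗ[k] W) : Prop :=
  ∀ g : G, f ∘ₗ ρ g = τ g ∘ₗ f

/-- `ρ` is a direct summand of `τ` (as `kG`-modules). -/
def IsDirectSummand {G V W : Type*} [Group G] [AddCommGroup V] [Module k V]
    [AddCommGroup W] [Module k W]
    (ρ : Representation k G V) (τ : Representation k G W) : Prop :=
  ∃ (i : V →ₗ[k] W) (p : W →ₗ[k] V),
    IsEquivariant k ρ τ i ∧ IsEquivariant k τ ρ p ∧ p ∘ₗ i = LinearMap.id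

/-- `ρ` is an indecomposable `kG`-module: it is nonzero and admits no nontrivial
equivariant idempotent. -/
def Indecomposable {G V : Type*} [Group G] [AddCommGroup V] [Module k V]
    (ρ : Representation k G V) : Prop :=
  Nontrivial V ∧ ∀ f : V →ₗ[k] V, IsEquivariant k ρ ρ f → f ∘ₗ f = f →
    f = 0 ∨ f = LinearMap.id

variable {H : Type*} [Group H] (G : Subgroup H)
variable {V : Type*} [AddCommGroup V] [Module k V]

/-- The carrier of the module induced from the subgroup `G ≤ H`:
functions `f : H → V` with `f (x * g) = ρ g⁻¹ (f x)` (for finite groups this model of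
(co)induction realizes `k[H] ⊗_{k[G]} V`). -/
def inducedSubmodule (ρ : Representation k G V) : Submodule k (H → V) where
  carrier := {f | ∀ (x : H) (g : G), f (x * g) = ρ g⁻¹ (f x)}
  add_mem' := by
    intro f₁ f₂ h₁ h₂ x g
    simp [h₁ x g, h₂ x g]
  zero_mem' := by intro x g; simp
  smul_mem' := by
    intro c f hf x g
    simp [hf x g]

/-- The representation of `H` induced from a representation `ρ` of `G ≤ H`. -/
def induced (ρ : Representation k G V) : Representation k H (inducedSubmodule k G ρ) where
  toFun h := LinearMap.restrict (LinearMap.funLeft k V (fun x => h⁻¹ * x))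
    (by
      intro f hf x g
      simpa [LinearMap.funLeft, mul_assoc] using hf (h⁻¹ * x) g)
  map_one' := by
    ext f x
    simp [LinearMap.restrict_apply, LinearMap.funLeft]
  map_mul' h₁ h₂ := by
    ext f x
    simp [LinearMap.restrict_apply, LinearMap.funLeft, mul_assoc]

/-- The restriction of a representation of `H` to a subgroup `G ≤ H`. -/
def resRep {W : Type*} [AddCommGroup W] [Module k W] (ρ : Representation k H W) :
    Representation k G W :=
  ρ.comp G.subtype

/-- The permutation representation of `G` on a `G`-set `X`. -/
def permRep (G X : Type*) [Group G] [MulAction G X] : Representation k G (X → k) where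
  toFun g := LinearMap.funLeft k k (fun x => g⁻¹ • x)
  map_one' := by
    ext v x
    simp [LinearMap.funLeft]
  map_mul' g₁ g₂ := by
    ext v x
    simp [LinearMap.funLeft, mul_smul]

/-- `ρ` is (isomorphic to) a permutation module. -/
def IsPermutationRep {G V : Type*} [Group G] [AddCommGroup V] [Module k V]
    (ρ : Representation k G V) : Prop :=
  ∃ (X : Type) (_ : Finite X) (m : MulAction G X),
    ∃ e : V ≃ₗ[k] (X → k), IsEquivariant k ρ (permRep k G X) e.toLinearMap

/-- `ρ` has trivial source: it is a direct summand of a permutation module. -/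
def HasTrivialSource {G V : Type*} [Group G] [AddCommGroup V] [Module k V]
    (ρ : Representation k G V) : Prop :=
  ∃ (X : Type) (_ : Finite X) (m : MulAction G X), IsDirectSummand k ρ (permRep k G X)

/-- `ρ` is relatively `D`-projective: it is a direct summand of the module induced
from its restriction to `D`. -/
def RelativelyProjective (D : Subgroup H) {W : Type*} [AddCommGroup W] [Module k W]
    (ρ : Representation k H W) : Prop :=
  IsDirectSummand k ρ (induced k D (resRep k D ρ))

/-- `D` is a vertex of `ρ`: `ρ` is relatively `D`-projective and `D` is subconjugate to
any subgroup relative to which `ρ` is projective. -/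
def IsVertex (D : Subgroup H) {W : Type*} [AddCommGroup W] [Module k W]
    (ρ : Representation k H W) : Prop :=
  RelativelyProjective k D ρ ∧
    ∀ D' : Subgroup H, RelativelyProjective k D' ρ → ∃ h : H, ∀ d ∈ D, h * d * h⁻¹ ∈ D'

end RepPrelude


open PiTensorProduct
open scoped TensorProduct

section DirectSummand

variable {k : Type*} [Field k] {G : Type*} [Group G]
variable {U V W : Type*} [AddCommGroup U] [Module k U] [AddCommGroup V] [Module k V]
  [AddCommGroup W] [Module k W]
variable {ρ : Representation k G U} {σ : Representation k G V} {τ : Representation k G W}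

theorem IsEquivariant.comp {f : U →ₗ[k] V} {f' : V →ₗ[k] W} (hf : IsEquivariant k ρ σ f)
    (hf' : IsEquivariant k σ τ f') : IsEquivariant k ρ τ (f' ∘ₗ f) := fun g => by
  rw [LinearMap.comp_assoc, hf g, ← LinearMap.comp_assoc, hf' g, LinearMap.comp_assoc]

theorem IsDirectSummand.trans (h₁ : IsDirectSummand k ρ σ) (h₂ : IsDirectSummand k σ τ) :
    IsDirectSummand k ρ τ := by
  obtain ⟨i₁, p₁, hi₁, hp₁, hpi₁⟩ := h₁
  obtain ⟨i₂, p₂, hi₂, hp₂, hpi₂⟩ := h₂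
  refine ⟨i₂ ∘ₗ i₁, p₁ ∘ₗ p₂, hi₁.comp hi₂, hp₂.comp hp₁, ?_⟩
  rw [LinearMap.comp_assoc, ← LinearMap.comp_assoc i₁, hpi₂, LinearMap.id_comp, hpi₁]

theorem isDirectSummand_of_linearEquiv (e : U ≃ₗ[k] V) (he : IsEquivariant k ρ σ e) :
    IsDirectSummand k ρ σ := by
  refine ⟨e, e.symm, he, fun g => ?_, by ext; simp⟩
  rw [LinearEquiv.eq_comp_toLinearMap_symm, LinearMap.comp_assoc, ← he g]
  ext; simp

theorem isEquivariant_permRep_funCongrLeft {X Y : Type*} [MulAction G X] [MulAction G Y]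
    (e : X ≃ Y) (he : ∀ (g : G) (x : X), e (g • x) = g • e x) :
    IsEquivariant k (permRep k G Y) (permRep k G X) (LinearEquiv.funCongrLeft k k e) := by
  intro g
  ext v x
  simp [permRep, LinearMap.funLeft, he, LinearEquiv.funCongrLeft_apply]

/-- `HasTrivialSource` asks for a `G`-set in `Type`; transport the action to `Fin n`. -/
theorem hasTrivialSource_of_isDirectSummand_permRep {Y : Type*} [Finite Y] [MulAction G Y]
    (h : IsDirectSummand k ρ (permRep k G Y)) : HasTrivialSource k ρ := by
  obtain ⟨n, ⟨e⟩⟩ := Finite.exists_equiv_fin Y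
  let := e.symm.mulAction G
  exact ⟨Fin n, inferInstance, _, h.trans <| isDirectSummand_of_linearEquiv _ <|
    isEquivariant_permRep_funCongrLeft e.symm fun g x => by simp [Equiv.smul_def]⟩

end DirectSummand

namespace PiTensorProduct

variable {R ι : Type*} [CommRing R] [Fintype ι] {κ : ι → Type*} [∀ i, Finite (κ i)]

noncomputable def ofFunEquiv : (⨂[R] i, (κ i → R)) ≃ₗ[R] ((Π i, κ i) → R) := by
  classical
  exact congr (fun i => (Finsupp.linearEquivFunOnFinite R R (κ i)).symm) ≪≫ₗ
    ofFinsuppEquiv' ≪≫ₗ Finsupp.linearEquivFunOnFinite R R _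

@[simp]
theorem ofFunEquiv_tprod_apply (v : Π i, κ i → R) (x : Π i, κ i) :
    ofFunEquiv (tprod R v) x = ∏ i, v i (x i) := by
  simp [ofFunEquiv, Finsupp.linearEquivFunOnFinite_symm_apply]

end PiTensorProduct

section TensorInduction

variable {k : Type*} [Field k] {G : Type*} [Group G] (H : Subgroup G) (s : G ⧸ H → G)
  (hmem : ∀ (g : G) (c : G ⧸ H), (s c)⁻¹ * g * s (g⁻¹ • c) ∈ H)

def tensorInductionCocycle (g : G) (c : G ⧸ H) : H := ⟨(s c)⁻¹ * g * s (g⁻¹ • c), hmem g c⟩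

theorem tensorInductionCocycle_one (c : G ⧸ H) : tensorInductionCocycle H s hmem 1 c = 1 :=
  Subtype.ext <| by simp [tensorInductionCocycle]

theorem tensorInductionCocycle_mul (g₁ g₂ : G) (c : G ⧸ H) :
    tensorInductionCocycle H s hmem (g₁ * g₂) c =
      tensorInductionCocycle H s hmem g₁ c * tensorInductionCocycle H s hmem g₂ (g₁⁻¹ • c) :=
  Subtype.ext <| by
    simp only [tensorInductionCocycle, Subgroup.coe_mul, mul_inv_rev, mul_smul]
    group

theorem tensorInductionCocycle_inv (g : G) (c : G ⧸ H) :
    tensorInductionCocycle H s hmem g⁻¹ c = (tensorInductionCocycle H s hmem g (g • c))⁻¹ :=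
  Subtype.ext <| by
    simp only [tensorInductionCocycle, inv_smul_smul, inv_inv, Subgroup.coe_inv, mul_inv_rev]
    group

abbrev tensorInducedAction (X : Type*) [MulAction H X] : MulAction G (G ⧸ H → X) where
  smul g x c := tensorInductionCocycle H s hmem g c • x (g⁻¹ • c)
  one_smul x := funext fun c => by
    change tensorInductionCocycle H s hmem 1 c • x (1⁻¹ • c) = x c
    rw [tensorInductionCocycle_one, inv_one, one_smul, one_smul]
  mul_smul g₁ g₂ x := funext fun c => by
    change tensorInductionCocycle H s hmem (g₁ * g₂) c • x ((g₁ * g₂)⁻¹ • c) =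
      tensorInductionCocycle H s hmem g₁ c •
        tensorInductionCocycle H s hmem g₂ (g₁⁻¹ • c) • x (g₂⁻¹ • g₁⁻¹ • c)
    rw [tensorInductionCocycle_mul, mul_smul, mul_inv_rev, mul_smul]

def IsTensorInduced {B : Type*} [AddCommGroup B] [Module k B] (ρ : Representation k H B)
    (τ : Representation k G (⨂[k] _ : G ⧸ H, B)) : Prop :=
  ∀ (g : G) (b : G ⧸ H → B),
    τ g (tprod k b) = tprod k fun c => ρ (tensorInductionCocycle H s hmem g c) (b (g⁻¹ • c))

variable {H s hmem}
variable {B W : Type*} [AddCommGroup B] [Module k B] [AddCommGroup W] [Module k W]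
  {ρ : Representation k H B} {ρ' : Representation k H W}
  {τ : Representation k G (⨂[k] _ : G ⧸ H, B)}
  {τ' : Representation k G (⨂[k] _ : G ⧸ H, W)}

theorem IsTensorInduced.isEquivariant_map (hτ : IsTensorInduced H s hmem ρ τ)
    (hτ' : IsTensorInduced H s hmem ρ' τ') {f : B →ₗ[k] W} (hf : IsEquivariant k ρ ρ' f) :
    IsEquivariant k τ τ' (map fun _ => f) := by
  intro g
  ext b
  simp only [LinearMap.compMultilinearMap_apply, LinearMap.comp_apply, map_tprod]
  rw [hτ, hτ', map_tprod]
  congr 1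
  funext c
  exact LinearMap.congr_fun (hf _) _

theorem IsTensorInduced.isDirectSummand (hτ : IsTensorInduced H s hmem ρ τ)
    (hτ' : IsTensorInduced H s hmem ρ' τ') (h : IsDirectSummand k ρ ρ') :
    IsDirectSummand k τ τ' := by
  obtain ⟨i, p, hi, hp, hpi⟩ := h
  refine ⟨map fun _ => i, map fun _ => p, hτ.isEquivariant_map hτ' hi,
    hτ'.isEquivariant_map hτ hp, ?_⟩
  rw [← map_comp, hpi, map_id]

end TensorInduction

section PermRep

variable {k : Type*} [Field k] {G : Type*} [Group G] (H : Subgroup G) [Fintype (G ⧸ H)]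
  (s : G ⧸ H → G) (hmem : ∀ (g : G) (c : G ⧸ H), (s c)⁻¹ * g * s (g⁻¹ • c) ∈ H)
  (X : Type*) [Finite X] [MulAction H X]

noncomputable def tensorInducedPermRep : Representation k G (⨂[k] _ : G ⧸ H, X → k) :=
  let := tensorInducedAction H s hmem X
  ((ofFunEquiv (κ := fun _ : G ⧸ H => X)).symm.conjAlgEquiv k).toAlgHom.toMonoidHom.comp
    (permRep k G (G ⧸ H → X))

theorem isEquivariant_tensorInducedPermRep_ofFunEquiv :
    let := tensorInducedAction H s hmem X
    IsEquivariant k (tensorInducedPermRep (k := k) H s hmem X) (permRep k G (G ⧸ H → X))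
      ofFunEquiv.toLinearMap := by
  intro _ g
  ext v
  simp [tensorInducedPermRep, LinearEquiv.conjAlgEquiv_apply]

theorem isTensorInduced_tensorInducedPermRep :
    IsTensorInduced H s hmem (permRep k H X) (tensorInducedPermRep (k := k) H s hmem X) := by
  intro g v
  apply ofFunEquiv.injective
  funext x
  simp only [tensorInducedPermRep, permRep, AlgHom.toRingHom_eq_coe, AlgEquiv.toAlgHom_toRingHom,
    RingHom.toMonoidHom_eq_coe, MonoidHom.coe_comp, MonoidHom.coe_coe, RingHom.coe_coe,
    MonoidHom.coe_mk, OneHom.coe_mk, Function.comp_apply, LinearEquiv.conjAlgEquiv_apply_apply,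
    LinearEquiv.symm_symm, LinearEquiv.apply_symm_apply, funLeft_apply, ofFunEquiv_tprod_apply]
  refine (Fintype.prod_equiv (MulAction.toPerm g⁻¹) _ _ fun c => ?_).symm
  change _ = v (g⁻¹ • c)
    (tensorInductionCocycle H s hmem g⁻¹ (g⁻¹ • c) • x (g⁻¹⁻¹ • g⁻¹ • c))
  rw [tensorInductionCocycle_inv, inv_inv, smul_inv_smul]

variable {H s hmem X} {B : Type*} [AddCommGroup B] [Module k B] {ρ : Representation k H B}
  {τ : Representation k G (⨂[k] _ : G ⧸ H, B)}

theorem IsTensorInduced.isDirectSummand_permRep (hτ : IsTensorInduced H s hmem ρ τ)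
    (hρ : IsDirectSummand k ρ (permRep k H X)) :
    let := tensorInducedAction H s hmem X
    IsDirectSummand k τ (permRep k G (G ⧸ H → X)) :=
  (hτ.isDirectSummand (isTensorInduced_tensorInducedPermRep H s hmem X) hρ).trans <|
    isDirectSummand_of_linearEquiv _
      (isEquivariant_tensorInducedPermRep_ofFunEquiv H s hmem X)

end PermRep

open scoped TensorProduct in
theorem tensorInduced_hasTrivialSource_general
    {k : Type*} [Field k]
    {G : Type*} [Group G] [Finite G] (H : Subgroup G)
    {B : Type*} [AddCommGroup B] [Module k B]
    (ρ : Representation k H B)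
    (s : G ⧸ H → G)
    (hmem : ∀ (g : G) (c : G ⧸ H), (s c)⁻¹ * g * s (g⁻¹ • c) ∈ H)
    (τ : Representation k G (⨂[k] (_c : G ⧸ H), B))
    (hτ : ∀ (g : G) (b : (G ⧸ H) → B),
      τ g (PiTensorProduct.tprod k b) =
        PiTensorProduct.tprod k
          (fun c => ρ ⟨(s c)⁻¹ * g * s (g⁻¹ • c), hmem g c⟩ (b (g⁻¹ • c))))
    (hB : HasTrivialSource k ρ) :
    HasTrivialSource k τ := by
  have hτ : IsTensorInduced H s hmem ρ τ := hτ
  obtain ⟨X, _, _, hρ⟩ := hB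
  have := Fintype.ofFinite (G ⧸ H)
  let := tensorInducedAction H s hmem X
  exact hasTrivialSource_of_isDirectSummand_permRep (hτ.isDirectSummand_permRep hρ)

open scoped TensorProduct in
/-- Let `k` be a field of characteristic `p`, `G` a finite group and `H ≤ G`.  Let `τ` be the
tensor induction to `G` of a representation `ρ` of `H` on `B`: the representation on
`⨂_{c ∈ G/H} B` whose action is given, for a section `s` of `G → G/H`, by
`g · (⊗_c b_c) = ⊗_c (s c)⁻¹ g s (g⁻¹ c) · b_{g⁻¹ c}`.  If `B` is a direct summand of a
permutation `kH`-module, then the tensor induced module `B↑_H^G ⊗` is a direct summand of a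
permutation `kG`-module. -/
theorem tensorInduced_hasTrivialSource
    {k : Type*} [Field k] {p : ℕ} (hp : p.Prime) [CharP k p]
    {G : Type*} [Group G] [Finite G] (H : Subgroup G)
    {B : Type*} [AddCommGroup B] [Module k B] [Module.Finite k B]
    (ρ : Representation k H B)
    (s : G ⧸ H → G) (hs : ∀ c : G ⧸ H, (QuotientGroup.mk (s c) : G ⧸ H) = c)
    (hmem : ∀ (g : G) (c : G ⧸ H), (s c)⁻¹ * g * s (g⁻¹ • c) ∈ H)
    (τ : Representation k G (⨂[k] (_c : G ⧸ H), B))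
    (hτ : ∀ (g : G) (b : (G ⧸ H) → B),
      τ g (PiTensorProduct.tprod k b) =
        PiTensorProduct.tprod k
          (fun c => ρ ⟨(s c)⁻¹ * g * s (g⁻¹ • c), hmem g c⟩ (b (g⁻¹ • c))))
    (hB : HasTrivialSource k ρ) :
    HasTrivialSource k τ :=
  tensorInduced_hasTrivialSource_general H ρ s hmem τ hτ hB
end
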